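/- arXiv:1910.09012 — 6 statements merged into one kernel-verified Lean document; each statement's English description precedes it below -/
import Mathlib

section
/- If there exist scalars α_1, α_2, α_3, α_4 ∈ k such that Q = (α_1 z_1 + α_2 z_2 + α_3 z_3 + α_4 z_4)², then D_i = 0 for every i = 1, …, 21. -/
noncomputable section

/-- The skew-commutation relation `z_j z_i = μ_{ij} z_i z_j` on the free algebra. -/
inductive SkewRel (k : Type*) [Field k] (μ : Fin 4 → Fin 4 → k) :
    FreeAlgebra k (Fin 4) → FreeAlgebra k (Fin 4) → Prop
  | rel (i j : Fin 4) :
      SkewRel k μ (FreeAlgebra.ι k j * FreeAlgebra.ι k i)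
        (μ i j • (FreeAlgebra.ι k i * FreeAlgebra.ι k j))

/-- The generators `z_1, …, z_4` of `S = k⟨z_1,…,z_4⟩/(z_j z_i - μ_{ij} z_i z_j)`. -/
def z (k : Type*) [Field k] (μ : Fin 4 → Fin 4 → k) (i : Fin 4) :
    RingQuot (SkewRel k μ) :=
  RingQuot.mkAlgHom k (SkewRel k μ) (FreeAlgebra.ι k i)

/-- A two-dimensional representation of the quotient supported on two generators. -/
lemma repIJ (k : Type*) [Field k] (μ : Fin 4 → Fin 4 → k) (hμdiag : ∀ i, μ i i = 1)
    (hμ : ∀ i j, μ i j * μ j i = 1) (i j : Fin 4) (hij : i ≠ j) :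
    ∃ φ : RingQuot (SkewRel k μ) →ₐ[k] Matrix (Fin 2) (Fin 2) k,
      φ (z k μ i) = !![0,1;0,0] ∧ φ (z k μ j) = !![μ i j,0;0,1] ∧
      ∀ l, l ≠ i → l ≠ j → φ (z k μ l) = 0 := by
  set N : Matrix (Fin 2) (Fin 2) k := !![0,1;0,0] with hN
  set D : Matrix (Fin 2) (Fin 2) k := !![μ i j,0;0,1] with hD
  have hNN : N * N = 0 := by
    ext a b; fin_cases a <;> fin_cases b <;> simp [hN, Matrix.mul_apply, Fin.sum_univ_two]
  have hND : N * D = N := by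
    ext a b; fin_cases a <;> fin_cases b <;> simp [hN, hD, Matrix.mul_apply, Fin.sum_univ_two]
  have hDN : D * N = μ i j • N := by
    ext a b; fin_cases a <;> fin_cases b <;> simp [hN, hD, Matrix.mul_apply, Fin.sum_univ_two]
  set f : Fin 4 → Matrix (Fin 2) (Fin 2) k :=
    fun l => if l = i then N else if l = j then D else 0 with hf
  have hfi : f i = N := by simp [hf]
  have hfj : f j = D := by simp [hf, Ne.symm hij]
  have hfl : ∀ l, l ≠ i → l ≠ j → f l = 0 := by intro l h1 h2; simp [hf, h1, h2]
  have key : ∀ p q : Fin 4, f q * f p = μ p q • (f p * f q) := by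
    intro p q
    rcases eq_or_ne p i with hpi | hpi
    · rw [hpi]
      rcases eq_or_ne q i with hqi | hqi
      · rw [hqi, hfi, hNN, hμdiag, one_smul]
      · rcases eq_or_ne q j with hqj | hqj
        · rw [hqj, hfi, hfj, hDN, hND]
        · rw [hfl q hqi hqj]; simp
    · rcases eq_or_ne p j with hpj | hpj
      · rw [hpj]
        rcases eq_or_ne q i with hqi | hqi
        · rw [hqi, hfi, hfj, hND, hDN, smul_smul, hμ j i, one_smul]
        · rcases eq_or_ne q j with hqj | hqj
          · rw [hqj, hμdiag, one_smul]
          · rw [hfl q hqi hqj]; simp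
      · rw [hfl p hpi hpj]; simp
  refine ⟨RingQuot.liftAlgHom k ⟨FreeAlgebra.lift k f, ?_⟩, ?_, ?_, ?_⟩
  · rintro x y ⟨p, q⟩
    simp [key p q]
  · simpa [z, RingQuot.liftAlgHom_mkAlgHom_apply] using hfi
  · simpa [z, RingQuot.liftAlgHom_mkAlgHom_apply] using hfj
  · intro l hli hlj
    simpa [z, RingQuot.liftAlgHom_mkAlgHom_apply] using hfl l hli hlj

set_option maxHeartbeats 2000000 in
theorem stmt1 (k : Type*) [Field k] [IsAlgClosed k] (h2 : (2 : k) ≠ 0)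
    (μ : Fin 4 → Fin 4 → k) (hμdiag : ∀ i, μ i i = 1)
    (hμ : ∀ i j, μ i j * μ j i = 1)
    (a11 a22 a33 a44 a12 a13 a14 a23 a24 a34 : k)
    (hfac : ∃ α1 α2 α3 α4 : k,
      (a11 • (z k μ 0 * z k μ 0) + a22 • (z k μ 1 * z k μ 1) +
      a33 • (z k μ 2 * z k μ 2) + a44 • (z k μ 3 * z k μ 3) +
      (2 * a12) • (z k μ 0 * z k μ 1) + (2 * a13) • (z k μ 0 * z k μ 2) +
      (2 * a14) • (z k μ 0 * z k μ 3) + (2 * a23) • (z k μ 1 * z k μ 2) +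
      (2 * a24) • (z k μ 1 * z k μ 3) + (2 * a34) • (z k μ 2 * z k μ 3)) =
        (α1 • z k μ 0 + α2 • z k μ 1 + α3 • z k μ 2 + α4 • z k μ 3) ^ 2) :
    (4 * a12 ^ 2 - (1 + μ 0 1) ^ 2 * a11 * a22 = 0 ∧
      4 * a13 ^ 2 - (1 + μ 0 2) ^ 2 * a11 * a33 = 0 ∧
      4 * a14 ^ 2 - (1 + μ 0 3) ^ 2 * a11 * a44 = 0 ∧
      4 * a23 ^ 2 - (1 + μ 1 2) ^ 2 * a22 * a33 = 0 ∧
      4 * a24 ^ 2 - (1 + μ 1 3) ^ 2 * a22 * a44 = 0 ∧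
      4 * a34 ^ 2 - (1 + μ 2 3) ^ 2 * a33 * a44 = 0 ∧
      2 * (1 + μ 1 2) * a12 * a13 - (1 + μ 0 1) * (1 + μ 0 2) * a11 * a23 = 0 ∧
      2 * (1 + μ 1 3) * a12 * a14 - (1 + μ 0 1) * (1 + μ 0 3) * a11 * a24 = 0 ∧
      2 * (1 + μ 0 2) * a12 * a23 - (1 + μ 0 1) * (1 + μ 1 2) * a13 * a22 = 0 ∧
      2 * (1 + μ 0 3) * a12 * a24 - (1 + μ 0 1) * (1 + μ 1 3) * a14 * a22 = 0 ∧
      2 * (1 + μ 2 3) * a13 * a14 - (1 + μ 0 2) * (1 + μ 0 3) * a11 * a34 = 0 ∧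
      2 * (1 + μ 0 1) * a13 * a23 - (1 + μ 0 2) * (1 + μ 1 2) * a33 * a12 = 0 ∧
      2 * (1 + μ 0 3) * a13 * a34 - (1 + μ 0 2) * (1 + μ 2 3) * a33 * a14 = 0 ∧
      2 * (1 + μ 0 1) * a14 * a24 - (1 + μ 0 3) * (1 + μ 1 3) * a12 * a44 = 0 ∧
      2 * (1 + μ 0 2) * a14 * a34 - (1 + μ 0 3) * (1 + μ 2 3) * a13 * a44 = 0 ∧
      2 * (1 + μ 2 3) * a23 * a24 - (1 + μ 1 2) * (1 + μ 1 3) * a22 * a34 = 0 ∧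
      2 * (1 + μ 1 3) * a23 * a34 - (1 + μ 1 2) * (1 + μ 2 3) * a33 * a24 = 0 ∧
      2 * (1 + μ 1 2) * a24 * a34 - (1 + μ 1 3) * (1 + μ 2 3) * a23 * a44 = 0 ∧
      (1 + μ 0 2) * (1 + μ 1 3) * a12 * a34 - (1 + μ 0 1) * (1 + μ 2 3) * a13 * a24 = 0 ∧
      (1 + μ 0 3) * (1 + μ 1 2) * a13 * a24 - (1 + μ 0 2) * (1 + μ 1 3) * a14 * a23 = 0 ∧
      (1 + μ 0 1) * (1 + μ 2 3) * a14 * a23 - (1 + μ 0 3) * (1 + μ 1 2) * a12 * a34 = 0) := by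
  obtain ⟨α1, α2, α3, α4, hq⟩ := hfac
  -- pair (1,0) : a11 = α1 ^ 2
  have h11 : a11 = α1 ^ 2 := by
    obtain ⟨φ, hzi, hzj, hz0⟩ := repIJ k μ hμdiag hμ 1 0 (by decide)
    have heq := congrArg φ hq
    simp only [_root_.map_add, _root_.map_smul, _root_.map_mul, map_pow, hzi, hzj,
      hz0 2 (by decide) (by decide), hz0 3 (by decide) (by decide)] at heq
    have e := Matrix.ext_iff.2 heq 1 1
    simp [Matrix.mul_apply, Fin.sum_univ_two, pow_two, Matrix.add_apply, Matrix.smul_apply] at e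
    linear_combination e
  -- pair (0,1) : a22 = α2 ^ 2 and 2 a12 = (1 + μ 0 1) α1 α2
  obtain ⟨h22, h12⟩ : a22 = α2 ^ 2 ∧ 2 * a12 = (1 + μ 0 1) * (α1 * α2) := by
    obtain ⟨φ, hzi, hzj, hz0⟩ := repIJ k μ hμdiag hμ 0 1 (by decide)
    have heq := congrArg φ hq
    simp only [_root_.map_add, _root_.map_smul, _root_.map_mul, map_pow, hzi, hzj,
      hz0 2 (by decide) (by decide), hz0 3 (by decide) (by decide)] at heq
    have e1 := Matrix.ext_iff.2 heq 1 1
    have e2 := Matrix.ext_iff.2 heq 0 1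
    simp [Matrix.mul_apply, Fin.sum_univ_two, pow_two, Matrix.add_apply, Matrix.smul_apply]
      at e1 e2
    exact ⟨by linear_combination e1, by linear_combination e2⟩
  -- pair (0,2) : a33 = α3 ^ 2 and 2 a13 = (1 + μ 0 2) α1 α3
  obtain ⟨h33, h13⟩ : a33 = α3 ^ 2 ∧ 2 * a13 = (1 + μ 0 2) * (α1 * α3) := by
    obtain ⟨φ, hzi, hzj, hz0⟩ := repIJ k μ hμdiag hμ 0 2 (by decide)
    have heq := congrArg φ hq
    simp only [_root_.map_add, _root_.map_smul, _root_.map_mul, map_pow, hzi, hzj,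
      hz0 1 (by decide) (by decide), hz0 3 (by decide) (by decide)] at heq
    have e1 := Matrix.ext_iff.2 heq 1 1
    have e2 := Matrix.ext_iff.2 heq 0 1
    simp [Matrix.mul_apply, Fin.sum_univ_two, pow_two, Matrix.add_apply, Matrix.smul_apply]
      at e1 e2
    exact ⟨by linear_combination e1, by linear_combination e2⟩
  -- pair (0,3) : a44 = α4 ^ 2 and 2 a14 = (1 + μ 0 3) α1 α4
  obtain ⟨h44, h14⟩ : a44 = α4 ^ 2 ∧ 2 * a14 = (1 + μ 0 3) * (α1 * α4) := by
    obtain ⟨φ, hzi, hzj, hz0⟩ := repIJ k μ hμdiag hμ 0 3 (by decide)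
    have heq := congrArg φ hq
    simp only [_root_.map_add, _root_.map_smul, _root_.map_mul, map_pow, hzi, hzj,
      hz0 1 (by decide) (by decide), hz0 2 (by decide) (by decide)] at heq
    have e1 := Matrix.ext_iff.2 heq 1 1
    have e2 := Matrix.ext_iff.2 heq 0 1
    simp [Matrix.mul_apply, Fin.sum_univ_two, pow_two, Matrix.add_apply, Matrix.smul_apply]
      at e1 e2
    exact ⟨by linear_combination e1, by linear_combination e2⟩
  -- pair (1,2) : 2 a23 = (1 + μ 1 2) α2 α3
  have h23 : 2 * a23 = (1 + μ 1 2) * (α2 * α3) := by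
    obtain ⟨φ, hzi, hzj, hz0⟩ := repIJ k μ hμdiag hμ 1 2 (by decide)
    have heq := congrArg φ hq
    simp only [_root_.map_add, _root_.map_smul, _root_.map_mul, map_pow, hzi, hzj,
      hz0 0 (by decide) (by decide), hz0 3 (by decide) (by decide)] at heq
    have e2 := Matrix.ext_iff.2 heq 0 1
    simp [Matrix.mul_apply, Fin.sum_univ_two, pow_two, Matrix.add_apply, Matrix.smul_apply] at e2
    linear_combination e2
  -- pair (1,3) : 2 a24 = (1 + μ 1 3) α2 α4
  have h24 : 2 * a24 = (1 + μ 1 3) * (α2 * α4) := by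
    obtain ⟨φ, hzi, hzj, hz0⟩ := repIJ k μ hμdiag hμ 1 3 (by decide)
    have heq := congrArg φ hq
    simp only [_root_.map_add, _root_.map_smul, _root_.map_mul, map_pow, hzi, hzj,
      hz0 0 (by decide) (by decide), hz0 2 (by decide) (by decide)] at heq
    have e2 := Matrix.ext_iff.2 heq 0 1
    simp [Matrix.mul_apply, Fin.sum_univ_two, pow_two, Matrix.add_apply, Matrix.smul_apply] at e2
    linear_combination e2
  -- pair (2,3) : 2 a34 = (1 + μ 2 3) α3 α4
  have h34 : 2 * a34 = (1 + μ 2 3) * (α3 * α4) := by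
    obtain ⟨φ, hzi, hzj, hz0⟩ := repIJ k μ hμdiag hμ 2 3 (by decide)
    have heq := congrArg φ hq
    simp only [_root_.map_add, _root_.map_smul, _root_.map_mul, map_pow, hzi, hzj,
      hz0 0 (by decide) (by decide), hz0 1 (by decide) (by decide)] at heq
    have e2 := Matrix.ext_iff.2 heq 0 1
    simp [Matrix.mul_apply, Fin.sum_univ_two, pow_two, Matrix.add_apply, Matrix.smul_apply] at e2
    linear_combination e2
  subst h11 h22 h33 h44
  clear hq hμ hμdiag
  have cg : ∀ x : k, 2 * x = 0 → x = 0 := fun x hx =>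
    (mul_eq_zero.mp hx).resolve_left h2
  refine ⟨?_, ?_, ?_, ?_, ?_, ?_, ?_, ?_, ?_, ?_, ?_, ?_, ?_, ?_, ?_, ?_, ?_, ?_, ?_, ?_, ?_⟩
  · linear_combination (2*a12 + (1+μ 0 1)*(α1*α2)) * h12
  · linear_combination (2*a13 + (1+μ 0 2)*(α1*α3)) * h13
  · linear_combination (2*a14 + (1+μ 0 3)*(α1*α4)) * h14
  · linear_combination (2*a23 + (1+μ 1 2)*(α2*α3)) * h23
  · linear_combination (2*a24 + (1+μ 1 3)*(α2*α4)) * h24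
  · linear_combination (2*a34 + (1+μ 2 3)*(α3*α4)) * h34
  · refine cg _ ?_
    linear_combination (1+μ 1 2)*(2*a13)*h12 + (1+μ 1 2)*(1+μ 0 1)*(α1*α2)*h13
      - (1+μ 0 1)*(1+μ 0 2)*α1^2*h23
  · refine cg _ ?_
    linear_combination (1+μ 1 3)*(2*a14)*h12 + (1+μ 1 3)*(1+μ 0 1)*(α1*α2)*h14
      - (1+μ 0 1)*(1+μ 0 3)*α1^2*h24
  · refine cg _ ?_
    linear_combination (1+μ 0 2)*(2*a23)*h12 + (1+μ 0 2)*(1+μ 0 1)*(α1*α2)*h23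
      - (1+μ 0 1)*(1+μ 1 2)*α2^2*h13
  · refine cg _ ?_
    linear_combination (1+μ 0 3)*(2*a24)*h12 + (1+μ 0 3)*(1+μ 0 1)*(α1*α2)*h24
      - (1+μ 0 1)*(1+μ 1 3)*α2^2*h14
  · refine cg _ ?_
    linear_combination (1+μ 2 3)*(2*a14)*h13 + (1+μ 2 3)*(1+μ 0 2)*(α1*α3)*h14
      - (1+μ 0 2)*(1+μ 0 3)*α1^2*h34
  · refine cg _ ?_
    linear_combination (1+μ 0 1)*(2*a23)*h13 + (1+μ 0 1)*(1+μ 0 2)*(α1*α3)*h23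
      - (1+μ 0 2)*(1+μ 1 2)*α3^2*h12
  · refine cg _ ?_
    linear_combination (1+μ 0 3)*(2*a34)*h13 + (1+μ 0 3)*(1+μ 0 2)*(α1*α3)*h34
      - (1+μ 0 2)*(1+μ 2 3)*α3^2*h14
  · refine cg _ ?_
    linear_combination (1+μ 0 1)*(2*a24)*h14 + (1+μ 0 1)*(1+μ 0 3)*(α1*α4)*h24
      - (1+μ 0 3)*(1+μ 1 3)*α4^2*h12
  · refine cg _ ?_
    linear_combination (1+μ 0 2)*(2*a34)*h14 + (1+μ 0 2)*(1+μ 0 3)*(α1*α4)*h34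
      - (1+μ 0 3)*(1+μ 2 3)*α4^2*h13
  · refine cg _ ?_
    linear_combination (1+μ 2 3)*(2*a24)*h23 + (1+μ 2 3)*(1+μ 1 2)*(α2*α3)*h24
      - (1+μ 1 2)*(1+μ 1 3)*α2^2*h34
  · refine cg _ ?_
    linear_combination (1+μ 1 3)*(2*a34)*h23 + (1+μ 1 3)*(1+μ 1 2)*(α2*α3)*h34
      - (1+μ 1 2)*(1+μ 2 3)*α3^2*h24
  · refine cg _ ?_
    linear_combination (1+μ 1 2)*(2*a34)*h24 + (1+μ 1 2)*(1+μ 1 3)*(α2*α4)*h34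
      - (1+μ 1 3)*(1+μ 2 3)*α4^2*h23
  · refine cg _ (cg _ ?_)
    linear_combination (1+μ 0 2)*(1+μ 1 3)*(2*a34)*h12
      + (1+μ 0 2)*(1+μ 1 3)*(1+μ 0 1)*(α1*α2)*h34
      - (1+μ 0 1)*(1+μ 2 3)*(2*a24)*h13 - (1+μ 0 1)*(1+μ 2 3)*(1+μ 0 2)*(α1*α3)*h24
  · refine cg _ (cg _ ?_)
    linear_combination (1+μ 0 3)*(1+μ 1 2)*(2*a24)*h13
      + (1+μ 0 3)*(1+μ 1 2)*(1+μ 0 2)*(α1*α3)*h24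
      - (1+μ 0 2)*(1+μ 1 3)*(2*a23)*h14 - (1+μ 0 2)*(1+μ 1 3)*(1+μ 0 3)*(α1*α4)*h23
  · refine cg _ (cg _ ?_)
    linear_combination (1+μ 0 1)*(1+μ 2 3)*(2*a23)*h14
      + (1+μ 0 1)*(1+μ 2 3)*(1+μ 0 3)*(α1*α4)*h23
      - (1+μ 0 3)*(1+μ 1 2)*(2*a34)*h12 - (1+μ 0 3)*(1+μ 1 2)*(1+μ 0 1)*(α1*α2)*h34
end
end

section
/- Assume a_{11} = 0. If there exist scalars α_1, α_2, α_3, α_4, β_2, β_3, β_4 ∈ k such that Q = (α_1 z_1 + α_2 z_2 + α_3 z_3 + α_4 z_4)(β_2 z_2 + β_3 z_3 + β_4 z_4), then D22 = 0, D23 = 0 and D24 = 0. -/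
noncomputable section

section Aux

variable {k : Type*} [Field k]

/-- Auxiliary matrices `M c d i = c i • E₀₁ + d i • E₁₂` in 3×3 matrices. -/
def MM (c d : Fin 4 → k) (i : Fin 4) : Matrix (Fin 3) (Fin 3) k :=
  c i • Matrix.single 0 1 1 + d i • Matrix.single 1 2 1

lemma MM_mul (c d : Fin 4 → k) (i j : Fin 4) :
    MM c d i * MM c d j = (c i * d j) • Matrix.single 0 2 (1 : k) := by
  unfold MM
  rw [add_mul, mul_add, mul_add]
  rw [Matrix.smul_mul, Matrix.smul_mul, Matrix.smul_mul, Matrix.smul_mul,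
    Matrix.mul_smul, Matrix.mul_smul, Matrix.mul_smul, Matrix.mul_smul]
  rw [Matrix.single_mul_single_same,
    Matrix.single_mul_single_of_ne 1 0 1 0 (by decide : (1:Fin 3) ≠ 0),
    Matrix.single_mul_single_of_ne 1 1 2 1 (by decide : (2:Fin 3) ≠ 1)]
  simp [smul_smul, mul_comm]

/-- "c-vector" supported on `{p, q}`. -/
def cf (p q : Fin 4) (t : k) : Fin 4 → k :=
  fun i => if i = p then 1 else if i = q then t else 0

/-- "d-vector" supported on `{p, q}`. -/
def df (μ : Fin 4 → Fin 4 → k) (p q : Fin 4) (t : k) : Fin 4 → k :=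
  fun i => if i = p then μ p q else if i = q then t else 0

lemma hcd_pair (μ : Fin 4 → Fin 4 → k) (hμdiag : ∀ i, μ i i = 1)
    (hμ : ∀ i j, μ i j * μ j i = 1) (p q : Fin 4) (hpq : p ≠ q) (t : k) :
    ∀ i j, cf p q t j * df μ p q t i = μ i j * (cf p q t i * df μ p q t j) := by
  intro i j
  unfold cf df
  by_cases hip : i = p <;> by_cases hiq : i = q <;> by_cases hjp : j = p <;>
    by_cases hjq : j = q
  all_goals try exact absurd (hip.symm.trans hiq) hpq
  all_goals try exact absurd (hjp.symm.trans hjq) hpq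
  all_goals simp only [hip, hiq, hjp, hjq, hpq, Ne.symm hpq, if_true, if_false,
    ite_true, ite_false, eq_self_iff_true, mul_zero, zero_mul, add_zero, zero_add,
    mul_one, one_mul]
  all_goals first
    | ring1
    | (rw [hμdiag]; ring1)
    | linear_combination (-t) * hμ p q
    | linear_combination t * hμ p q
    | linear_combination (-(t * t)) * hμ p q
    | linear_combination (t * t) * hμ p q

lemma hcd_single (μ : Fin 4 → Fin 4 → k) (hμdiag : ∀ i, μ i i = 1) (q : Fin 4) :
    ∀ i j, cf q q 1 j * df μ q q 1 i = μ i j * (cf q q 1 i * df μ q q 1 j) := by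
  intro i j
  unfold cf df
  by_cases hiq : i = q <;> by_cases hjq : j = q <;>
    simp [hiq, hjq, hμdiag]

lemma extract (μ : Fin 4 → Fin 4 → k) (c d : Fin 4 → k)
    (hcd : ∀ i j, c j * d i = μ i j * (c i * d j))
    (a11 a22 a33 a44 a12 a13 a14 a23 a24 a34 α1 α2 α3 α4 β2 β3 β4 : k)
    (hfac :
      (a11 • (z k μ 0 * z k μ 0) + a22 • (z k μ 1 * z k μ 1) +
      a33 • (z k μ 2 * z k μ 2) + a44 • (z k μ 3 * z k μ 3) +
      (2 * a12) • (z k μ 0 * z k μ 1) + (2 * a13) • (z k μ 0 * z k μ 2) +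
      (2 * a14) • (z k μ 0 * z k μ 3) + (2 * a23) • (z k μ 1 * z k μ 2) +
      (2 * a24) • (z k μ 1 * z k μ 3) + (2 * a34) • (z k μ 2 * z k μ 3)) =
        (α1 • z k μ 0 + α2 • z k μ 1 + α3 • z k μ 2 + α4 • z k μ 3) *
          (β2 • z k μ 1 + β3 • z k μ 2 + β4 • z k μ 3)) :
    a11 * (c 0 * d 0) + a22 * (c 1 * d 1) + a33 * (c 2 * d 2) + a44 * (c 3 * d 3) +
      2 * a12 * (c 0 * d 1) + 2 * a13 * (c 0 * d 2) + 2 * a14 * (c 0 * d 3) +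
      2 * a23 * (c 1 * d 2) + 2 * a24 * (c 1 * d 3) + 2 * a34 * (c 2 * d 3) =
    (α1 * c 0 + α2 * c 1 + α3 * c 2 + α4 * c 3) *
      (β2 * d 1 + β3 * d 2 + β4 * d 3) := by
  have hrel : ∀ ⦃x y : FreeAlgebra k (Fin 4)⦄, SkewRel k μ x y →
      (FreeAlgebra.lift k (MM c d)) x = (FreeAlgebra.lift k (MM c d)) y := by
    intro x y h
    cases h with
    | rel i j =>
      simp only [map_mul, map_smul, FreeAlgebra.lift_ι_apply, MM_mul, smul_smul]
      rw [hcd i j]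
  set φ : RingQuot (SkewRel k μ) →ₐ[k] Matrix (Fin 3) (Fin 3) k :=
    RingQuot.liftAlgHom k ⟨FreeAlgebra.lift k (MM c d), hrel⟩ with hφ
  have φz : ∀ i, φ (z k μ i) = MM c d i := by
    intro i
    rw [hφ, z, RingQuot.liftAlgHom_mkAlgHom_apply, FreeAlgebra.lift_ι_apply]
  have h := congrArg φ hfac
  simp only [map_add, map_smul, map_mul, φz, MM_mul] at h
  simp only [mul_add, add_mul, Matrix.smul_mul, Matrix.mul_smul, MM_mul,
    smul_smul, ← add_smul] at h
  have h02 := congrArg (fun m : Matrix (Fin 3) (Fin 3) k => m 0 2) h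
  simp only [Matrix.smul_apply, Matrix.single_apply_same, smul_eq_mul,
    mul_one] at h02
  linear_combination h02

end Aux

theorem stmt4 (k : Type*) [Field k] [IsAlgClosed k] (h2 : (2 : k) ≠ 0)
    (μ : Fin 4 → Fin 4 → k) (hμdiag : ∀ i, μ i i = 1)
    (hμ : ∀ i j, μ i j * μ j i = 1)
    (a11 a22 a33 a44 a12 a13 a14 a23 a24 a34 : k)
    (ha11 : a11 = 0)
    (hfac : ∃ α1 α2 α3 α4 β2 β3 β4 : k,
      (a11 • (z k μ 0 * z k μ 0) + a22 • (z k μ 1 * z k μ 1) +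
      a33 • (z k μ 2 * z k μ 2) + a44 • (z k μ 3 * z k μ 3) +
      (2 * a12) • (z k μ 0 * z k μ 1) + (2 * a13) • (z k μ 0 * z k μ 2) +
      (2 * a14) • (z k μ 0 * z k μ 3) + (2 * a23) • (z k μ 1 * z k μ 2) +
      (2 * a24) • (z k μ 1 * z k μ 3) + (2 * a34) • (z k μ 2 * z k μ 3)) =
        (α1 • z k μ 0 + α2 • z k μ 1 + α3 • z k μ 2 + α4 • z k μ 3) *
          (β2 • z k μ 1 + β3 • z k μ 2 + β4 • z k μ 3)) :
    ((μ 1 2 * a33 * a12 ^ 2 - 2 * a23 * a12 * a13 + a22 * a13 ^ 2) * (μ 0 2 * μ 1 0 * a33 * a12 ^ 2 - 2 * a23 * a12 * a13 + μ 1 2 * μ 0 1 * μ 2 0 * a22 * a13 ^ 2)) = 0 ∧ ((μ 1 3 * a44 * a12 ^ 2 - 2 * a24 * a12 * a14 + a22 * a14 ^ 2) * (μ 0 3 * μ 1 0 * a44 * a12 ^ 2 - 2 * a24 * a12 * a14 + μ 1 3 * μ 0 1 * μ 3 0 * a22 * a14 ^ 2)) = 0 ∧ ((μ 2 3 * a44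 * a13 ^ 2 - 2 * a34 * a13 * a14 + a33 * a14 ^ 2) * (μ 0 3 * μ 2 0 * a44 * a13 ^ 2 - 2 * a34 * a13 * a14 + μ 2 3 * μ 0 2 * μ 3 0 * a33 * a14 ^ 2)) = 0 := by
  obtain ⟨α1, α2, α3, α4, β2, β3, β4, hfac⟩ := hfac
  -- diagonal coefficients, via single-point supports
  have s1 := extract μ (cf 1 1 1) (df μ 1 1 1) (hcd_single μ hμdiag 1)
    a11 a22 a33 a44 a12 a13 a14 a23 a24 a34 α1 α2 α3 α4 β2 β3 β4 hfac
  have s2 := extract μ (cf 2 2 1) (df μ 2 2 1) (hcd_single μ hμdiag 2)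
    a11 a22 a33 a44 a12 a13 a14 a23 a24 a34 α1 α2 α3 α4 β2 β3 β4 hfac
  have s3 := extract μ (cf 3 3 1) (df μ 3 3 1) (hcd_single μ hμdiag 3)
    a11 a22 a33 a44 a12 a13 a14 a23 a24 a34 α1 α2 α3 α4 β2 β3 β4 hfac
  simp only [cf, df, Fin.reduceEq, reduceIte, if_true, mul_zero, zero_mul, mul_one,
    one_mul, add_zero, zero_add, hμdiag] at s1 s2 s3
  have h22 : a22 = α2 * β2 := by linear_combination s1
  have h33 : a33 = α3 * β3 := by linear_combination s2
  have h44 : a44 = α4 * β4 := by linear_combination s3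
  -- pair supports, at t = 1 and t = -1
  have ep01 := extract μ (cf 0 1 1) (df μ 0 1 1) (hcd_pair μ hμdiag hμ 0 1 (by decide) 1)
    a11 a22 a33 a44 a12 a13 a14 a23 a24 a34 α1 α2 α3 α4 β2 β3 β4 hfac
  have em01 := extract μ (cf 0 1 (-1)) (df μ 0 1 (-1)) (hcd_pair μ hμdiag hμ 0 1 (by decide) (-1))
    a11 a22 a33 a44 a12 a13 a14 a23 a24 a34 α1 α2 α3 α4 β2 β3 β4 hfac
  have ep02 := extract μ (cf 0 2 1) (df μ 0 2 1) (hcd_pair μ hμdiag hμ 0 2 (by decide) 1)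
    a11 a22 a33 a44 a12 a13 a14 a23 a24 a34 α1 α2 α3 α4 β2 β3 β4 hfac
  have em02 := extract μ (cf 0 2 (-1)) (df μ 0 2 (-1)) (hcd_pair μ hμdiag hμ 0 2 (by decide) (-1))
    a11 a22 a33 a44 a12 a13 a14 a23 a24 a34 α1 α2 α3 α4 β2 β3 β4 hfac
  have ep03 := extract μ (cf 0 3 1) (df μ 0 3 1) (hcd_pair μ hμdiag hμ 0 3 (by decide) 1)
    a11 a22 a33 a44 a12 a13 a14 a23 a24 a34 α1 α2 α3 α4 β2 β3 β4 hfac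
  have em03 := extract μ (cf 0 3 (-1)) (df μ 0 3 (-1)) (hcd_pair μ hμdiag hμ 0 3 (by decide) (-1))
    a11 a22 a33 a44 a12 a13 a14 a23 a24 a34 α1 α2 α3 α4 β2 β3 β4 hfac
  have ep12 := extract μ (cf 1 2 1) (df μ 1 2 1) (hcd_pair μ hμdiag hμ 1 2 (by decide) 1)
    a11 a22 a33 a44 a12 a13 a14 a23 a24 a34 α1 α2 α3 α4 β2 β3 β4 hfac
  have em12 := extract μ (cf 1 2 (-1)) (df μ 1 2 (-1)) (hcd_pair μ hμdiag hμ 1 2 (by decide) (-1))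
    a11 a22 a33 a44 a12 a13 a14 a23 a24 a34 α1 α2 α3 α4 β2 β3 β4 hfac
  have ep13 := extract μ (cf 1 3 1) (df μ 1 3 1) (hcd_pair μ hμdiag hμ 1 3 (by decide) 1)
    a11 a22 a33 a44 a12 a13 a14 a23 a24 a34 α1 α2 α3 α4 β2 β3 β4 hfac
  have em13 := extract μ (cf 1 3 (-1)) (df μ 1 3 (-1)) (hcd_pair μ hμdiag hμ 1 3 (by decide) (-1))
    a11 a22 a33 a44 a12 a13 a14 a23 a24 a34 α1 α2 α3 α4 β2 β3 β4 hfac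
  have ep23 := extract μ (cf 2 3 1) (df μ 2 3 1) (hcd_pair μ hμdiag hμ 2 3 (by decide) 1)
    a11 a22 a33 a44 a12 a13 a14 a23 a24 a34 α1 α2 α3 α4 β2 β3 β4 hfac
  have em23 := extract μ (cf 2 3 (-1)) (df μ 2 3 (-1)) (hcd_pair μ hμdiag hμ 2 3 (by decide) (-1))
    a11 a22 a33 a44 a12 a13 a14 a23 a24 a34 α1 α2 α3 α4 β2 β3 β4 hfac
  simp only [cf, df, Fin.reduceEq, reduceIte, if_true, mul_zero, zero_mul, mul_one,
    one_mul, add_zero, zero_add, mul_neg, neg_mul, neg_neg] at ep01 em01 ep02 em02 ep03 em03 ep12 em12 ep13 em13 ep23 em23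
  have h12 : 2 * a12 = α1 * β2 :=
    mul_left_cancel₀ h2 (by linear_combination ep01 - em01)
  have h13 : 2 * a13 = α1 * β3 :=
    mul_left_cancel₀ h2 (by linear_combination ep02 - em02)
  have h14 : 2 * a14 = α1 * β4 :=
    mul_left_cancel₀ h2 (by linear_combination ep03 - em03)
  have h23 : 2 * a23 = α2 * β3 + μ 1 2 * (α3 * β2) :=
    mul_left_cancel₀ h2 (by linear_combination ep12 - em12)
  have h24 : 2 * a24 = α2 * β4 + μ 1 3 * (α4 * β2) :=
    mul_left_cancel₀ h2 (by linear_combination ep13 - em13)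
  have h34 : 2 * a34 = α3 * β4 + μ 2 3 * (α4 * β3) :=
    mul_left_cancel₀ h2 (by linear_combination ep23 - em23)
  have h8ne : (8 : k) ≠ 0 := by
    have h := mul_ne_zero (mul_ne_zero h2 h2) h2
    norm_num at h
    exact h
  have F1 : μ 1 2 * a33 * a12 ^ 2 - 2 * a23 * a12 * a13 + a22 * a13 ^ 2 = 0 := by
    have h8 : (8 : k) * (μ 1 2 * a33 * a12 ^ 2 - 2 * a23 * a12 * a13 + a22 * a13 ^ 2) = 0 := by
      linear_combination (8 * μ 1 2 * a12 ^ 2) * h33 + (8 * a13 ^ 2) * h22 +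
        (-8 * a12 * a13) * h23 +
        (4 * μ 1 2 * α3 * β3 * a12 + 2 * μ 1 2 * α3 * β3 * α1 * β2 -
          4 * (α2 * β3 + μ 1 2 * (α3 * β2)) * a13) * h12 +
        (4 * α2 * β2 * a13 + 2 * α2 * β2 * α1 * β3 -
          2 * (α2 * β3 + μ 1 2 * (α3 * β2)) * α1 * β2) * h13
    rcases mul_eq_zero.mp h8 with h | h
    · exact absurd h h8ne
    · exact h
  have F2 : μ 1 3 * a44 * a12 ^ 2 - 2 * a24 * a12 * a14 + a22 * a14 ^ 2 = 0 := by
    have h8 : (8 : k) * (μ 1 3 * a44 * a12 ^ 2 - 2 * a24 * a12 * a14 + a22 * a14 ^ 2) = 0 := by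
      linear_combination (8 * μ 1 3 * a12 ^ 2) * h44 + (8 * a14 ^ 2) * h22 +
        (-8 * a12 * a14) * h24 +
        (4 * μ 1 3 * α4 * β4 * a12 + 2 * μ 1 3 * α4 * β4 * α1 * β2 -
          4 * (α2 * β4 + μ 1 3 * (α4 * β2)) * a14) * h12 +
        (4 * α2 * β2 * a14 + 2 * α2 * β2 * α1 * β4 -
          2 * (α2 * β4 + μ 1 3 * (α4 * β2)) * α1 * β2) * h14
    rcases mul_eq_zero.mp h8 with h | h
    · exact absurd h h8ne
    · exact h
  have F3 : μ 2 3 * a44 * a13 ^ 2 - 2 * a34 * a13 * a14 + a33 * a14 ^ 2 = 0 := by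
    have h8 : (8 : k) * (μ 2 3 * a44 * a13 ^ 2 - 2 * a34 * a13 * a14 + a33 * a14 ^ 2) = 0 := by
      linear_combination (8 * μ 2 3 * a13 ^ 2) * h44 + (8 * a14 ^ 2) * h33 +
        (-8 * a13 * a14) * h34 +
        (4 * μ 2 3 * α4 * β4 * a13 + 2 * μ 2 3 * α4 * β4 * α1 * β3 -
          4 * (α3 * β4 + μ 2 3 * (α4 * β3)) * a14) * h13 +
        (4 * α3 * β3 * a14 + 2 * α3 * β3 * α1 * β4 -
          2 * (α3 * β4 + μ 2 3 * (α4 * β3)) * α1 * β3) * h14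
    rcases mul_eq_zero.mp h8 with h | h
    · exact absurd h h8ne
    · exact h
  exact ⟨mul_eq_zero_of_left F1 _, mul_eq_zero_of_left F2 _, mul_eq_zero_of_left F3 _⟩
end
end

section
/- Assume a_{11} = 0. If there exist scalars α_2, α_3, α_4, β_1, β_2, β_3, β_4 ∈ k such that Q = (α_2 z_2 + α_3 z_3 + α_4 z_4)(β_1 z_1 + β_2 z_2 + β_3 z_3 + β_4 z_4), then D22 = 0, D23 = 0 and D24 = 0. -/
noncomputable section

namespace SkewAux

variable {k : Type*} [Field k]

def Amat : Matrix (Fin 6) (Fin 6) k :=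
  Matrix.of fun r c =>
    if (r = 1 ∧ c = 0) ∨ (r = 3 ∧ c = 1) ∨ (r = 4 ∧ c = 2) then 1 else 0

def Bmat (c0 : k) : Matrix (Fin 6) (Fin 6) k :=
  Matrix.of fun r c =>
    if (r = 2 ∧ c = 0) ∨ (r = 5 ∧ c = 2) then 1 else if r = 4 ∧ c = 1 then c0 else 0

set_option maxHeartbeats 1000000 in
lemma hBA (c : k) : Bmat c * Amat = c • (Amat * Bmat c) := by
  ext i j
  fin_cases i <;> fin_cases j <;>
    simp [Amat, Bmat, Matrix.mul_apply, Fin.sum_univ_six]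

def fmat (i j : Fin 4) (c : k) : Fin 4 → Matrix (Fin 6) (Fin 6) k :=
  fun t => if t = i then Amat else if t = j then Bmat c else 0

lemma f_rel (μ : Fin 4 → Fin 4 → k) (hμdiag : ∀ i, μ i i = 1)
    (hμ : ∀ i j, μ i j * μ j i = 1) (i j : Fin 4) (hij : i ≠ j) (a b : Fin 4) :
    fmat i j (μ i j) b * fmat i j (μ i j) a
      = μ a b • (fmat i j (μ i j) a * fmat i j (μ i j) b) := by
  unfold fmat
  by_cases ha : a = i
  · by_cases hb : b = i
    · simp [ha, hb, hμdiag]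
    · by_cases hb' : b = j
      · simp only [ha, hb', if_pos rfl, if_neg (Ne.symm hij), if_true]
        exact hBA (μ i j)
      · simp [ha, hb, hb']
  · by_cases ha' : a = j
    · by_cases hb : b = i
      · simp only [ha', hb, if_pos rfl, if_neg (Ne.symm hij), if_true]
        rw [hBA, smul_smul, mul_comm, hμ, one_smul]
      · by_cases hb' : b = j
        · simp [ha', hb', Ne.symm hij, hμdiag]
        · simp [ha', hb, hb', Ne.symm hij]
    · simp [ha, ha']

def ψ (μ : Fin 4 → Fin 4 → k) (hμdiag : ∀ i, μ i i = 1)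
    (hμ : ∀ i j, μ i j * μ j i = 1) (i j : Fin 4) (hij : i ≠ j) :
    RingQuot (SkewRel k μ) →ₐ[k] Matrix (Fin 6) (Fin 6) k :=
  RingQuot.liftAlgHom k ⟨FreeAlgebra.lift k (fmat i j (μ i j)), by
    rintro x y ⟨a, b⟩
    simp only [map_mul, map_smul, FreeAlgebra.lift_ι_apply]
    exact f_rel μ hμdiag hμ i j hij a b⟩

lemma ψ_z (μ : Fin 4 → Fin 4 → k) (hμdiag : ∀ i, μ i i = 1)
    (hμ : ∀ i j, μ i j * μ j i = 1) (i j : Fin 4) (hij : i ≠ j) (t : Fin 4) :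
    ψ μ hμdiag hμ i j hij (z k μ t) = fmat i j (μ i j) t := by
  unfold ψ z
  rw [RingQuot.liftAlgHom_mkAlgHom_apply]
  simp [FreeAlgebra.lift_ι_apply]

end SkewAux

open SkewAux

set_option maxHeartbeats 2000000

theorem stmt5 (k : Type*) [Field k] [IsAlgClosed k] (h2 : (2 : k) ≠ 0)
    (μ : Fin 4 → Fin 4 → k) (hμdiag : ∀ i, μ i i = 1)
    (hμ : ∀ i j, μ i j * μ j i = 1)
    (a11 a22 a33 a44 a12 a13 a14 a23 a24 a34 : k)
    (ha11 : a11 = 0)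
    (hfac : ∃ α2 α3 α4 β1 β2 β3 β4 : k,
      (a11 • (z k μ 0 * z k μ 0) + a22 • (z k μ 1 * z k μ 1) +
      a33 • (z k μ 2 * z k μ 2) + a44 • (z k μ 3 * z k μ 3) +
      (2 * a12) • (z k μ 0 * z k μ 1) + (2 * a13) • (z k μ 0 * z k μ 2) +
      (2 * a14) • (z k μ 0 * z k μ 3) + (2 * a23) • (z k μ 1 * z k μ 2) +
      (2 * a24) • (z k μ 1 * z k μ 3) + (2 * a34) • (z k μ 2 * z k μ 3)) =
        (α2 • z k μ 1 + α3 • z k μ 2 + α4 • z k μ 3) *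
          (β1 • z k μ 0 + β2 • z k μ 1 + β3 • z k μ 2 + β4 • z k μ 3)) :
    ((μ 1 2 * a33 * a12 ^ 2 - 2 * a23 * a12 * a13 + a22 * a13 ^ 2) * (μ 0 2 * μ 1 0 * a33 * a12 ^ 2 - 2 * a23 * a12 * a13 + μ 1 2 * μ 0 1 * μ 2 0 * a22 * a13 ^ 2)) = 0 ∧ ((μ 1 3 * a44 * a12 ^ 2 - 2 * a24 * a12 * a14 + a22 * a14 ^ 2) * (μ 0 3 * μ 1 0 * a44 * a12 ^ 2 - 2 * a24 * a12 * a14 + μ 1 3 * μ 0 1 * μ 3 0 * a22 * a14 ^ 2)) = 0 ∧ ((μ 2 3 * a44 * a13 ^ 2 - 2 * a34 * a13 * a14 + a33 * a14 ^ 2) * (μ 0 3 * μ 2 0 * a44 * a13 ^ 2 - 2 * a34 * a13 * a14 + μ 2 3 * μ 0 2 * μ 3 0 * a33 * a14 ^ 2)) = 0 := by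
  obtain ⟨α2, α3, α4, β1, β2, β3, β4, heq⟩ := hfac
  -- pair (0,1)
  have h01 := congrArg (ψ μ hμdiag hμ 0 1 (by decide)) heq
  simp (config := {decide := true}) only [map_add, map_smul, map_mul, ψ_z, fmat] at h01
  have e12 := congrArg (fun M : Matrix (Fin 6) (Fin 6) k => M 4 0) h01
  have e22 := congrArg (fun M : Matrix (Fin 6) (Fin 6) k => M 5 0) h01
  simp (config := {decide := true}) only [Matrix.add_apply, Matrix.smul_apply,
    Matrix.mul_apply, Fin.sum_univ_six, Matrix.zero_apply, Amat, Bmat,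
    Matrix.of_apply, if_true, if_false] at e12 e22
  norm_num at e12 e22
  -- pair (0,2)
  have h02 := congrArg (ψ μ hμdiag hμ 0 2 (by decide)) heq
  simp (config := {decide := true}) only [map_add, map_smul, map_mul, ψ_z, fmat] at h02
  have e13 := congrArg (fun M : Matrix (Fin 6) (Fin 6) k => M 4 0) h02
  have e33 := congrArg (fun M : Matrix (Fin 6) (Fin 6) k => M 5 0) h02
  simp (config := {decide := true}) only [Matrix.add_apply, Matrix.smul_apply,
    Matrix.mul_apply, Fin.sum_univ_six, Matrix.zero_apply, Amat, Bmat,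
    Matrix.of_apply, if_true, if_false] at e13 e33
  norm_num at e13 e33
  -- pair (0,3)
  have h03 := congrArg (ψ μ hμdiag hμ 0 3 (by decide)) heq
  simp (config := {decide := true}) only [map_add, map_smul, map_mul, ψ_z, fmat] at h03
  have e14 := congrArg (fun M : Matrix (Fin 6) (Fin 6) k => M 4 0) h03
  have e44 := congrArg (fun M : Matrix (Fin 6) (Fin 6) k => M 5 0) h03
  simp (config := {decide := true}) only [Matrix.add_apply, Matrix.smul_apply,
    Matrix.mul_apply, Fin.sum_univ_six, Matrix.zero_apply, Amat, Bmat,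
    Matrix.of_apply, if_true, if_false] at e14 e44
  norm_num at e14 e44
  -- pair (1,2)
  have h12 := congrArg (ψ μ hμdiag hμ 1 2 (by decide)) heq
  simp (config := {decide := true}) only [map_add, map_smul, map_mul, ψ_z, fmat] at h12
  have e23 := congrArg (fun M : Matrix (Fin 6) (Fin 6) k => M 4 0) h12
  simp (config := {decide := true}) only [Matrix.add_apply, Matrix.smul_apply,
    Matrix.mul_apply, Fin.sum_univ_six, Matrix.zero_apply, Amat, Bmat,
    Matrix.of_apply, if_true, if_false] at e23
  norm_num at e23
  -- pair (1,3)
  have h13 := congrArg (ψ μ hμdiag hμ 1 3 (by decide)) heq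
  simp (config := {decide := true}) only [map_add, map_smul, map_mul, ψ_z, fmat] at h13
  have e24 := congrArg (fun M : Matrix (Fin 6) (Fin 6) k => M 4 0) h13
  simp (config := {decide := true}) only [Matrix.add_apply, Matrix.smul_apply,
    Matrix.mul_apply, Fin.sum_univ_six, Matrix.zero_apply, Amat, Bmat,
    Matrix.of_apply, if_true, if_false] at e24
  norm_num at e24
  -- pair (2,3)
  have h23 := congrArg (ψ μ hμdiag hμ 2 3 (by decide)) heq
  simp (config := {decide := true}) only [map_add, map_smul, map_mul, ψ_z, fmat] at h23
  have e34 := congrArg (fun M : Matrix (Fin 6) (Fin 6) k => M 4 0) h23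
  simp (config := {decide := true}) only [Matrix.add_apply, Matrix.smul_apply,
    Matrix.mul_apply, Fin.sum_univ_six, Matrix.zero_apply, Amat, Bmat,
    Matrix.of_apply, if_true, if_false] at e34
  norm_num at e34
  -- nonzeroness and inverses
  have n01 : μ 0 1 ≠ 0 := left_ne_zero_of_mul_eq_one (hμ 0 1)
  have n02 : μ 0 2 ≠ 0 := left_ne_zero_of_mul_eq_one (hμ 0 2)
  have n03 : μ 0 3 ≠ 0 := left_ne_zero_of_mul_eq_one (hμ 0 3)
  have m10 : μ 1 0 = (μ 0 1)⁻¹ := by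
    field_simp
    linear_combination hμ 1 0
  have m20 : μ 2 0 = (μ 0 2)⁻¹ := by
    field_simp
    linear_combination hμ 2 0
  have m30 : μ 3 0 = (μ 0 3)⁻¹ := by
    field_simp
    linear_combination hμ 3 0
  -- coefficient values
  have ha12 : a12 = α2 * μ 0 1 * β1 / 2 := by
    rw [eq_div_iff h2]; linear_combination e12
  have ha13 : a13 = α3 * μ 0 2 * β1 / 2 := by
    rw [eq_div_iff h2]; linear_combination e13
  have ha14 : a14 = α4 * μ 0 3 * β1 / 2 := by
    rw [eq_div_iff h2]; linear_combination e14
  have ha23 : a23 = (α2 * β3 + α3 * μ 1 2 * β2) / 2 := by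
    rw [eq_div_iff h2]; linear_combination e23
  have ha24 : a24 = (α2 * β4 + α4 * μ 1 3 * β2) / 2 := by
    rw [eq_div_iff h2]; linear_combination e24
  have ha34 : a34 = (α3 * β4 + α4 * μ 2 3 * β3) / 2 := by
    rw [eq_div_iff h2]; linear_combination e34
  have ha22 : a22 = α2 * β2 := by linear_combination e22
  have ha33 : a33 = α3 * β3 := by linear_combination e33
  have ha44 : a44 = α4 * β4 := by linear_combination e44
  refine ⟨?_, ?_, ?_⟩
  · have key : μ 0 2 * μ 1 0 * a33 * a12 ^ 2 - 2 * a23 * a12 * a13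
        + μ 1 2 * μ 0 1 * μ 2 0 * a22 * a13 ^ 2 = 0 := by
      rw [ha12, ha13, ha23, ha22, ha33, m10, m20]
      field_simp
      ring
    rw [key, mul_zero]
  · have key : μ 0 3 * μ 1 0 * a44 * a12 ^ 2 - 2 * a24 * a12 * a14
        + μ 1 3 * μ 0 1 * μ 3 0 * a22 * a14 ^ 2 = 0 := by
      rw [ha12, ha14, ha24, ha22, ha44, m10, m30]
      field_simp
      ring
    rw [key, mul_zero]
  · have key : μ 0 3 * μ 2 0 * a44 * a13 ^ 2 - 2 * a34 * a13 * a14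
        + μ 2 3 * μ 0 2 * μ 3 0 * a33 * a14 ^ 2 = 0 := by
      rw [ha13, ha14, ha34, ha33, ha44, m20, m30]
      field_simp
      ring
    rw [key, mul_zero]
end
end

section
/- Assume a_{11} ≠ 0. Then there exist linear forms L_1, L_2 ∈ S_1 such that Q = L_1 L_2 if and only if there exist X, Y, Z ∈ k with X² = a_{12}² − μ_{12}a_{11}a_{22}, Y² = a_{13}² − μ_{13}a_{11}a_{33}, Z² = a_{14}² − μ_{14}a_{11}a_{44}, such that D25(X,Y) = D26(X,Z) = D27(Y,Z) = 0. -/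
noncomputable section

section Aux

variable {k : Type*} [Field k] (μ : Fin 4 → Fin 4 → k)

lemma z_swap (i j : Fin 4) : z k μ j * z k μ i = μ i j • (z k μ i * z k μ j) := by
  have := RingQuot.mkAlgHom_rel k (SkewRel.rel (k := k) (μ := μ) i j)
  simpa [z, map_mul, map_smul] using this

abbrev V (k : Type*) [Field k] := k × (Fin 4 → k) × (Fin 4 → Fin 4 → k)

def M (i : Fin 4) : V k →ₗ[k] V k where
  toFun v := (0, fun j => if j = i then v.1 else 0,
    fun a b => (if a = i ∧ i ≤ b then v.2.1 b else 0)
      + (if b = i ∧ a < i then μ a i * v.2.1 a else 0))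
  map_add' x y := by
    ext <;> simp <;> split_ifs <;> ring
  map_smul' c x := by
    ext <;> simp <;> split_ifs <;> ring

lemma Mrel (hμdiag : ∀ i, μ i i = 1) (hμ : ∀ i j, μ i j * μ j i = 1) (i j : Fin 4) :
    (M μ j) * (M μ i) = μ i j • ((M μ i) * (M μ j)) := by
  apply LinearMap.ext; intro v
  show (M μ j) ((M μ i) v) = μ i j • ((M μ i) ((M μ j) v))
  ext a b
  · simp [M]
  · simp [M]
  · simp only [M, LinearMap.coe_mk, AddHom.coe_mk, Prod.smul_snd, Prod.smul_fst, Pi.smul_apply,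
      smul_eq_mul]
    split_ifs
    all_goals try ring
    all_goals try push_neg at *
    all_goals try omega
    all_goals casesm* _ ∧ _
    all_goals subst_vars
    all_goals try omega
    all_goals try simp [hμdiag]
    all_goals try ring
    all_goals linear_combination -v.1 * hμ b a

variable (hμdiag : ∀ i, μ i i = 1) (hμ : ∀ i j, μ i j * μ j i = 1)

def Ψ : RingQuot (SkewRel k μ) →ₐ[k] Module.End k (V k) :=
  RingQuot.liftAlgHom k ⟨FreeAlgebra.lift k (M μ), by
    rintro x y ⟨i, j⟩
    simp only [map_mul, map_smul, FreeAlgebra.lift_ι_apply]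
    exact Mrel μ hμdiag hμ i j⟩

lemma Ψ_z (i : Fin 4) : Ψ μ hμdiag hμ (z k μ i) = M μ i := by
  simp [Ψ, z, RingQuot.liftAlgHom_mkAlgHom_apply, FreeAlgebra.lift_ι_apply]

def e0 : V k := (1, 0, 0)

set_option maxHeartbeats 1000000 in
lemma coeff_prod (p q : Fin 4 → k) (a b : Fin 4) :
    (((Ψ μ hμdiag hμ) ((p 0 • z k μ 0 + p 1 • z k μ 1 + p 2 • z k μ 2 + p 3 • z k μ 3)
      * (q 0 • z k μ 0 + q 1 • z k μ 1 + q 2 • z k μ 2 + q 3 • z k μ 3))) (e0 : V k)).2.2 a b =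
    (if a ≤ b then p a * q b else 0) + (if a < b then μ a b * p b * q a else 0) := by
  simp only [map_mul, map_add, map_smul, Ψ_z, Module.End.mul_apply, LinearMap.add_apply,
    LinearMap.smul_apply, M, e0, LinearMap.coe_mk, AddHom.coe_mk]
  simp only [Prod.smul_mk, Prod.mk_add_mk, smul_zero, add_zero, zero_add, Prod.snd, Prod.fst,
    Pi.add_apply, Pi.smul_apply, smul_eq_mul, mul_ite, mul_zero, mul_one, Pi.zero_apply]
  fin_cases a <;> fin_cases b <;> simp <;> ring

set_option maxHeartbeats 1000000 in
lemma coeff_Q (c11 c22 c33 c44 c12 c13 c14 c23 c24 c34 : k) (a b : Fin 4) :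
    (((Ψ μ hμdiag hμ) (c11 • (z k μ 0 * z k μ 0) + c22 • (z k μ 1 * z k μ 1) +
      c33 • (z k μ 2 * z k μ 2) + c44 • (z k μ 3 * z k μ 3) +
      c12 • (z k μ 0 * z k μ 1) + c13 • (z k μ 0 * z k μ 2) +
      c14 • (z k μ 0 * z k μ 3) + c23 • (z k μ 1 * z k μ 2) +
      c24 • (z k μ 1 * z k μ 3) + c34 • (z k μ 2 * z k μ 3))) (e0 : V k)).2.2 a b =
    (!![c11, c12, c13, c14; 0, c22, c23, c24; 0, 0, c33, c34; 0, 0, 0, c44]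
      : Matrix (Fin 4) (Fin 4) k) a b := by
  simp only [map_mul, map_add, map_smul, Ψ_z, Module.End.mul_apply, LinearMap.add_apply,
    LinearMap.smul_apply, M, e0, LinearMap.coe_mk, AddHom.coe_mk]
  simp only [Prod.smul_mk, Prod.mk_add_mk, smul_zero, add_zero, zero_add, Prod.snd, Prod.fst,
    Pi.add_apply, Pi.smul_apply, smul_eq_mul, mul_ite, mul_zero, mul_one, Pi.zero_apply]
  fin_cases a <;> fin_cases b <;> simp [Matrix.vecHead, Matrix.vecTail]

end Aux

set_option maxHeartbeats 2000000 in
theorem stmt8 (k : Type*) [Field k] [IsAlgClosed k] (h2 : (2 : k) ≠ 0)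
    (μ : Fin 4 → Fin 4 → k) (hμdiag : ∀ i, μ i i = 1)
    (hμ : ∀ i j, μ i j * μ j i = 1)
    (a11 a22 a33 a44 a12 a13 a14 a23 a24 a34 : k)
    (ha11 : a11 ≠ 0) :
    (∃ L1 ∈ (Submodule.span k ({z k μ 0, z k μ 1, z k μ 2, z k μ 3} : Set (RingQuot (SkewRel k μ)))),
      ∃ L2 ∈ (Submodule.span k ({z k μ 0, z k μ 1, z k μ 2, z k μ 3} : Set (RingQuot (SkewRel k μ)))),
        (a11 • (z k μ 0 * z k μ 0) + a22 • (z k μ 1 * z k μ 1) +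
      a33 • (z k μ 2 * z k μ 2) + a44 • (z k μ 3 * z k μ 3) +
      (2 * a12) • (z k μ 0 * z k μ 1) + (2 * a13) • (z k μ 0 * z k μ 2) +
      (2 * a14) • (z k μ 0 * z k μ 3) + (2 * a23) • (z k μ 1 * z k μ 2) +
      (2 * a24) • (z k μ 1 * z k μ 3) + (2 * a34) • (z k μ 2 * z k μ 3)) = L1 * L2) ↔
      (∃ X Y Z : k, (X ^ 2 = a12 ^ 2 - μ 0 1 * a11 * a22 ∧ Y ^ 2 = a13 ^ 2 - μ 0 2 * a11 * a33 ∧ Z ^ 2 = a14 ^ 2 - μ 0 3 * a11 * a44) ∧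
        (μ 1 0 * (a12 + X) * (a13 - Y) + μ 1 2 * μ 2 0 * (a13 + Y) * (a12 - X) - 2 * a23 * a11) = 0 ∧ (μ 1 0 * (a12 + X) * (a14 - Z) + μ 1 3 * μ 3 0 * (a14 + Z) * (a12 - X) - 2 * a24 * a11) = 0 ∧ (μ 2 0 * (a13 + Y) * (a14 - Z) + μ 2 3 * μ 3 0 * (a14 + Z) * (a13 - Y) - 2 * a34 * a11) = 0) := by
  constructor
  · rintro ⟨L1, hL1, L2, hL2, hQ⟩
    rcases Submodule.mem_span_insert.mp hL1 with ⟨p0, w1, hw1, rfl⟩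
    rcases Submodule.mem_span_insert.mp hw1 with ⟨p1, w2, hw2, rfl⟩
    rcases Submodule.mem_span_insert.mp hw2 with ⟨p2, w3, hw3, rfl⟩
    rcases Submodule.mem_span_singleton.mp hw3 with ⟨p3, rfl⟩
    rcases Submodule.mem_span_insert.mp hL2 with ⟨q0, u1, hu1, rfl⟩
    rcases Submodule.mem_span_insert.mp hu1 with ⟨q1, u2, hu2, rfl⟩
    rcases Submodule.mem_span_insert.mp hu2 with ⟨q2, u3, hu3, rfl⟩
    rcases Submodule.mem_span_singleton.mp hu3 with ⟨q3, rfl⟩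
    set P : Fin 4 → k := ![p0, p1, p2, p3] with hP
    set Q : Fin 4 → k := ![q0, q1, q2, q3] with hQdef
    have hQ' : (a11 • (z k μ 0 * z k μ 0) + a22 • (z k μ 1 * z k μ 1) +
        a33 • (z k μ 2 * z k μ 2) + a44 • (z k μ 3 * z k μ 3) +
        (2 * a12) • (z k μ 0 * z k μ 1) + (2 * a13) • (z k μ 0 * z k μ 2) +
        (2 * a14) • (z k μ 0 * z k μ 3) + (2 * a23) • (z k μ 1 * z k μ 2) +
        (2 * a24) • (z k μ 1 * z k μ 3) + (2 * a34) • (z k μ 2 * z k μ 3)) =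
        (P 0 • z k μ 0 + P 1 • z k μ 1 + P 2 • z k μ 2 + P 3 • z k μ 3) *
        (Q 0 • z k μ 0 + Q 1 • z k μ 1 + Q 2 • z k μ 2 + Q 3 • z k μ 3) := by
      rw [hQ]; congr 1 <;> simp [hP, hQdef] <;> module
    have key : ∀ a b : Fin 4,
        (!![a11, 2*a12, 2*a13, 2*a14; 0, a22, 2*a23, 2*a24; 0, 0, a33, 2*a34; 0, 0, 0, a44]
          : Matrix (Fin 4) (Fin 4) k) a b =
        (if a ≤ b then P a * Q b else 0) + (if a < b then μ a b * P b * Q a else 0) := by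
      intro a b
      rw [← coeff_Q μ hμdiag hμ, hQ', coeff_prod]
    have E00 := key 0 0; have E11 := key 1 1; have E22 := key 2 2; have E33 := key 3 3
    have E01 := key 0 1; have E02 := key 0 2; have E03 := key 0 3
    have E12 := key 1 2; have E13 := key 1 3; have E23 := key 2 3
    simp (config := { decide := true }) [Matrix.vecHead, Matrix.vecTail] at E00 E11 E22 E33 E01 E02 E03 E12 E13 E23
    have ha12 : a12 = (P 0 * Q 1 + μ 0 1 * P 1 * Q 0) / 2 := by
      field_simp; linear_combination E01
    have ha13 : a13 = (P 0 * Q 2 + μ 0 2 * P 2 * Q 0) / 2 := by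
      field_simp; linear_combination E02
    have ha14 : a14 = (P 0 * Q 3 + μ 0 3 * P 3 * Q 0) / 2 := by
      field_simp; linear_combination E03
    have ha23 : a23 = (P 1 * Q 2 + μ 1 2 * P 2 * Q 1) / 2 := by
      field_simp; linear_combination E12
    have ha24 : a24 = (P 1 * Q 3 + μ 1 3 * P 3 * Q 1) / 2 := by
      field_simp; linear_combination E13
    have ha34 : a34 = (P 2 * Q 3 + μ 2 3 * P 3 * Q 2) / 2 := by
      field_simp; linear_combination E23
    subst ha12 ha13 ha14 ha23 ha24 ha34
    subst E00 E11 E22 E33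
    refine ⟨(μ 0 1 * P 1 * Q 0 - P 0 * Q 1) / 2, (μ 0 2 * P 2 * Q 0 - P 0 * Q 2) / 2,
      (μ 0 3 * P 3 * Q 0 - P 0 * Q 3) / 2, ⟨by field_simp; ring, by field_simp; ring, by field_simp; ring⟩, ?_, ?_, ?_⟩
    · field_simp
      linear_combination 4 * P 1 * Q 0 * P 0 * Q 2 * hμ 0 1 + 4 * μ 1 2 * P 2 * Q 0 * P 0 * Q 1 * hμ 0 2
    · field_simp
      linear_combination 4 * P 1 * Q 0 * P 0 * Q 3 * hμ 0 1 + 4 * μ 1 3 * P 3 * Q 0 * P 0 * Q 1 * hμ 0 3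
    · field_simp
      linear_combination 4 * P 2 * Q 0 * P 0 * Q 3 * hμ 0 2 + 4 * μ 2 3 * P 3 * Q 0 * P 0 * Q 2 * hμ 0 3
  · rintro ⟨X, Y, Z, ⟨hX, hY, hZ⟩, hD1, hD2, hD3⟩
    refine ⟨a11 • z k μ 0 + (μ 1 0 * (a12 + X)) • z k μ 1 + (μ 2 0 * (a13 + Y)) • z k μ 2
        + (μ 3 0 * (a14 + Z)) • z k μ 3, ?_,
      z k μ 0 + (a11⁻¹ * (a12 - X)) • z k μ 1 + (a11⁻¹ * (a13 - Y)) • z k μ 2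
        + (a11⁻¹ * (a14 - Z)) • z k μ 3, ?_, ?_⟩
    · refine Submodule.add_mem _ (Submodule.add_mem _ (Submodule.add_mem _ ?_ ?_) ?_) ?_ <;>
        exact Submodule.smul_mem _ _ (Submodule.subset_span (by simp))
    · refine Submodule.add_mem _ (Submodule.add_mem _ (Submodule.add_mem _ ?_ ?_) ?_) ?_
      · exact Submodule.subset_span (by simp)
      all_goals exact Submodule.smul_mem _ _ (Submodule.subset_span (by simp))
    · simp only [mul_add, add_mul, smul_mul_assoc, mul_smul_comm, smul_smul]
      simp only [z_swap μ 0 1, z_swap μ 0 2, z_swap μ 0 3, z_swap μ 1 2, z_swap μ 1 3,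
        z_swap μ 2 3, smul_smul]
      match_scalars
      · ring
      · field_simp; linear_combination μ 1 0 * hX - a11 * a22 * hμ 0 1
      · field_simp; linear_combination μ 2 0 * hY - a11 * a33 * hμ 0 2
      · field_simp; linear_combination μ 3 0 * hZ - a11 * a44 * hμ 0 3
      · field_simp; linear_combination -(a12 + X) * hμ 0 1
      · field_simp; linear_combination -(a13 + Y) * hμ 0 2
      · field_simp; linear_combination -(a14 + Z) * hμ 0 3
      · field_simp; linear_combination -hD1
      · field_simp; linear_combination -hD2
      · field_simp; linear_combination -hD3
end
end

section
/- Assume a_{11} ≠ 0. If there exist scalars α_2, α_3, α_4, β_2, β_3, β_4 ∈ k such that Q = a_{11}^{-1}(a_{11}z_1 + α_2 z_2 + α_3 z_3 + α_4 z_4)(a_{11}z_1 + β_2 z_2 + β_3 z_3 + β_4 z_4), then there exist X, Y, Z ∈ k with X² = a_{12}² − μ_{12}a_{11}a_{22}, Y² = a_{13}² − μ_{13}a_{11}a_{33}, Z² = a_{14}² − μ_{14}a_{11}a_{44}, such that D25(X,Y) = D26(X,Z) = D27(Y,Z) = 0. -/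
noncomputable section

namespace Stmt9Aux

variable {k : Type*} [Field k]

def Mv (u v : Fin 4 → k) (i : Fin 4) : Matrix (Fin 3) (Fin 3) k :=
  u i • Matrix.single 0 1 1 + v i • Matrix.single 1 2 1

lemma Mv_mul (u v : Fin 4 → k) (i j : Fin 4) :
    Mv u v i * Mv u v j = (u i * v j) • Matrix.single (0 : Fin 3) 2 1 := by
  simp only [Mv, add_mul, mul_add, Matrix.smul_mul, Matrix.mul_smul,
    Matrix.single_mul_single_same,
    Matrix.single_mul_single_of_ne _ _ _ _ (by decide : (1 : Fin 3) ≠ 0),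
    Matrix.single_mul_single_of_ne _ _ _ _ (by decide : (2 : Fin 3) ≠ 0),
    Matrix.single_mul_single_of_ne _ _ _ _ (by decide : (2 : Fin 3) ≠ 1),
    smul_smul, smul_zero, mul_one, add_zero, zero_add]
  rw [mul_comm]

def rep (μ : Fin 4 → Fin 4 → k) (u v : Fin 4 → k)
    (huv : ∀ p q, u q * v p = μ p q * (u p * v q)) :
    RingQuot (SkewRel k μ) →ₐ[k] Matrix (Fin 3) (Fin 3) k :=
  RingQuot.liftAlgHom k ⟨FreeAlgebra.lift k (Mv u v), by
    rintro x y ⟨i, j⟩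
    simp only [map_mul, map_smul, FreeAlgebra.lift_ι_apply, Mv_mul, smul_smul]
    rw [huv i j]⟩

lemma rep_z (μ : Fin 4 → Fin 4 → k) (u v : Fin 4 → k)
    (huv : ∀ p q, u q * v p = μ p q * (u p * v q)) (i : Fin 4) :
    rep μ u v huv (z k μ i) = Mv u v i := by
  rw [z, rep, RingQuot.liftAlgHom_mkAlgHom_apply, FreeAlgebra.lift_ι_apply]

end Stmt9Aux

namespace Stmt9Aux
variable {k : Type*} [Field k]

lemma key (μ : Fin 4 → Fin 4 → k) (u v : Fin 4 → k)
    (huv : ∀ p q, u q * v p = μ p q * (u p * v q))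
    (a11 a22 a33 a44 a12 a13 a14 a23 a24 a34 α2 α3 α4 β2 β3 β4 : k)
    (hfac : (a11 • (z k μ 0 * z k μ 0) + a22 • (z k μ 1 * z k μ 1) +
      a33 • (z k μ 2 * z k μ 2) + a44 • (z k μ 3 * z k μ 3) +
      (2 * a12) • (z k μ 0 * z k μ 1) + (2 * a13) • (z k μ 0 * z k μ 2) +
      (2 * a14) • (z k μ 0 * z k μ 3) + (2 * a23) • (z k μ 1 * z k μ 2) +
      (2 * a24) • (z k μ 1 * z k μ 3) + (2 * a34) • (z k μ 2 * z k μ 3)) =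
        a11⁻¹ • ((a11 • z k μ 0 + α2 • z k μ 1 + α3 • z k μ 2 + α4 • z k μ 3) *
          (a11 • z k μ 0 + β2 • z k μ 1 + β3 • z k μ 2 + β4 • z k μ 3))) :
    a11 * (u 0 * v 0) + a22 * (u 1 * v 1) + a33 * (u 2 * v 2) + a44 * (u 3 * v 3) +
      2 * a12 * (u 0 * v 1) + 2 * a13 * (u 0 * v 2) + 2 * a14 * (u 0 * v 3) +
      2 * a23 * (u 1 * v 2) + 2 * a24 * (u 1 * v 3) + 2 * a34 * (u 2 * v 3) =
      a11⁻¹ * ((a11 * u 0 + α2 * u 1 + α3 * u 2 + α4 * u 3) *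
        (a11 * v 0 + β2 * v 1 + β3 * v 2 + β4 * v 3)) := by
  have h := congrArg (fun m => rep μ u v huv m 0 2) hfac
  simp only [map_add, map_smul, map_mul, rep_z, Mv_mul, add_mul, mul_add,
    smul_mul_assoc, mul_smul_comm, smul_smul, Matrix.add_apply, Matrix.smul_apply,
    Matrix.single_apply_same, smul_eq_mul, mul_one] at h
  linear_combination h

end Stmt9Aux


open Stmt9Aux in
theorem stmt9 (k : Type*) [Field k] [IsAlgClosed k] (h2 : (2 : k) ≠ 0)
    (μ : Fin 4 → Fin 4 → k) (hμdiag : ∀ i, μ i i = 1)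
    (hμ : ∀ i j, μ i j * μ j i = 1)
    (a11 a22 a33 a44 a12 a13 a14 a23 a24 a34 : k)
    (ha11 : a11 ≠ 0)
    (hfac : ∃ α2 α3 α4 β2 β3 β4 : k,
      (a11 • (z k μ 0 * z k μ 0) + a22 • (z k μ 1 * z k μ 1) +
      a33 • (z k μ 2 * z k μ 2) + a44 • (z k μ 3 * z k μ 3) +
      (2 * a12) • (z k μ 0 * z k μ 1) + (2 * a13) • (z k μ 0 * z k μ 2) +
      (2 * a14) • (z k μ 0 * z k μ 3) + (2 * a23) • (z k μ 1 * z k μ 2) +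
      (2 * a24) • (z k μ 1 * z k μ 3) + (2 * a34) • (z k μ 2 * z k μ 3)) =
        a11⁻¹ • ((a11 • z k μ 0 + α2 • z k μ 1 + α3 • z k μ 2 + α4 • z k μ 3) *
          (a11 • z k μ 0 + β2 • z k μ 1 + β3 • z k μ 2 + β4 • z k μ 3))) :
    ∃ X Y Z : k, (X ^ 2 = a12 ^ 2 - μ 0 1 * a11 * a22 ∧ Y ^ 2 = a13 ^ 2 - μ 0 2 * a11 * a33 ∧ Z ^ 2 = a14 ^ 2 - μ 0 3 * a11 * a44) ∧
      (μ 1 0 * (a12 + X) * (a13 - Y) + μ 1 2 * μ 2 0 * (a13 + Y) * (a12 - X) - 2 * a23 * a11) = 0 ∧ (μ 1 0 * (a12 + X) * (a14 - Z) + μ 1 3 * μ 3 0 * (a14 + Z) * (a12 - X) - 2 * a24 * a11) = 0 ∧ (μ 2 0 * (a13 + Y) * (a14 - Z) + μ 2 3 * μ 3 0 * (a14 + Z) * (a13 - Y) - 2 * a34 * a11) = 0 := by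
  obtain ⟨α2, α3, α4, β2, β3, β4, hfac⟩ := hfac
  have keyi : ∀ (u v : Fin 4 → k), (∀ p q, u q * v p = μ p q * (u p * v q)) →
      a11 * (a11 * (u 0 * v 0) + a22 * (u 1 * v 1) + a33 * (u 2 * v 2) + a44 * (u 3 * v 3) +
      2 * a12 * (u 0 * v 1) + 2 * a13 * (u 0 * v 2) + 2 * a14 * (u 0 * v 3) +
      2 * a23 * (u 1 * v 2) + 2 * a24 * (u 1 * v 3) + 2 * a34 * (u 2 * v 3)) =
      ((a11 * u 0 + α2 * u 1 + α3 * u 2 + α4 * u 3) *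
        (a11 * v 0 + β2 * v 1 + β3 * v 2 + β4 * v 3)) := by
    intro u v huv
    have h := key μ u v huv a11 a22 a33 a44 a12 a13 a14 a23 a24 a34 α2 α3 α4 β2 β3 β4 hfac
    have h' := congrArg (a11 * ·) h
    simpa only [mul_inv_cancel_left₀ ha11] using h'
  have h11 := keyi ![0,1,0,0] ![0,1,0,0] (by
    intro p q; fin_cases p <;> fin_cases q <;> simp [hμdiag, hμ])
  have h22 := keyi ![0,0,1,0] ![0,0,1,0] (by
    intro p q; fin_cases p <;> fin_cases q <;> simp [hμdiag, hμ])
  have h33 := keyi ![0,0,0,1] ![0,0,0,1] (by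
    intro p q; fin_cases p <;> fin_cases q <;> simp [hμdiag, hμ])
  have h01 := keyi ![1,1,0,0] ![μ 0 1,1,0,0] (by
    intro p q; fin_cases p <;> fin_cases q <;> simp [hμdiag, hμ])
  have h02 := keyi ![1,0,1,0] ![μ 0 2,0,1,0] (by
    intro p q; fin_cases p <;> fin_cases q <;> simp [hμdiag, hμ])
  have h03 := keyi ![1,0,0,1] ![μ 0 3,0,0,1] (by
    intro p q; fin_cases p <;> fin_cases q <;> simp [hμdiag, hμ])
  have h12 := keyi ![0,1,1,0] ![0,μ 1 2,1,0] (by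
    intro p q; fin_cases p <;> fin_cases q <;> simp [hμdiag, hμ])
  have h13 := keyi ![0,1,0,1] ![0,μ 1 3,0,1] (by
    intro p q; fin_cases p <;> fin_cases q <;> simp [hμdiag, hμ])
  have h23 := keyi ![0,0,1,1] ![0,0,μ 2 3,1] (by
    intro p q; fin_cases p <;> fin_cases q <;> simp [hμdiag, hμ])
  simp only [Matrix.cons_val_zero, Matrix.cons_val_one, Matrix.head_cons,
    Matrix.cons_val_two, Matrix.cons_val_three, Matrix.tail_cons, Matrix.head_fin_const,
    mul_zero, zero_mul, mul_one, one_mul, add_zero, zero_add] at h11 h22 h33 h01 h02 h03 h12 h13 h23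
  have F2 : α2 * β2 = a11 * a22 := by linear_combination -h11
  have F3 : α3 * β3 = a11 * a33 := by linear_combination -h22
  have F4 : α4 * β4 = a11 * a44 := by linear_combination -h33
  have G2 : β2 + μ 0 1 * α2 = 2 * a12 := mul_left_cancel₀ ha11 (by linear_combination -h01 - F2)
  have G3 : β3 + μ 0 2 * α3 = 2 * a13 := mul_left_cancel₀ ha11 (by linear_combination -h02 - F3)
  have G4 : β4 + μ 0 3 * α4 = 2 * a14 := mul_left_cancel₀ ha11 (by linear_combination -h03 - F4)
  have H23 : α2 * β3 + μ 1 2 * (α3 * β2) = 2 * (a11 * a23) := by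
    linear_combination -h12 - μ 1 2 * F2 - F3
  have H24 : α2 * β4 + μ 1 3 * (α4 * β2) = 2 * (a11 * a24) := by
    linear_combination -h13 - μ 1 3 * F2 - F4
  have H34 : α3 * β4 + μ 2 3 * (α4 * β3) = 2 * (a11 * a34) := by
    linear_combination -h23 - μ 2 3 * F3 - F4
  refine ⟨a12 - β2, a13 - β3, a14 - β4, ⟨?_, ?_, ?_⟩, ?_, ?_, ?_⟩
  · linear_combination β2 * G2 - μ 0 1 * F2
  · linear_combination β3 * G3 - μ 0 2 * F3
  · linear_combination β4 * G4 - μ 0 3 * F4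
  · linear_combination H23 + (α2 * β3) * hμ 0 1 + (μ 1 2 * α3 * β2) * hμ 0 2 -
      (μ 1 0 * β3) * G2 - (μ 1 2 * μ 2 0 * β2) * G3
  · linear_combination H24 + (α2 * β4) * hμ 0 1 + (μ 1 3 * α4 * β2) * hμ 0 3 -
      (μ 1 0 * β4) * G2 - (μ 1 3 * μ 3 0 * β2) * G4
  · linear_combination H34 + (α3 * β4) * hμ 0 2 + (μ 2 3 * α4 * β3) * hμ 0 3 -
      (μ 2 0 * β4) * G3 - (μ 2 3 * μ 3 0 * β3) * G4
end
end

section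
/- Assume a_{11} ≠ 0 and that X, Y, Z ∈ k satisfy X² = a_{12}² − μ_{12}a_{11}a_{22}, Y² = a_{13}² − μ_{13}a_{11}a_{33}, Z² = a_{14}² − μ_{14}a_{11}a_{44} and D25(X,Y) = D26(X,Z) = D27(Y,Z) = 0. Then Q = a_{11}^{-1}[a_{11}z_1 + μ_{21}(a_{12}+X)z_2 + μ_{31}(a_{13}+Y)z_3 + μ_{41}(a_{14}+Z)z_4]·[a_{11}z_1 + (a_{12}−X)z_2 + (a_{13}−Y)z_3 + (a_{14}−Z)z_4]. -/
noncomputable section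

lemma zswap (k : Type*) [Field k] (μ : Fin 4 → Fin 4 → k) (i j : Fin 4) :
    z k μ j * z k μ i = μ i j • (z k μ i * z k μ j) := by
  have := RingQuot.mkAlgHom_rel k (SkewRel.rel (k := k) (μ := μ) i j)
  simpa [z, map_mul, map_smul] using this

theorem stmt10 (k : Type*) [Field k] [IsAlgClosed k] (h2 : (2 : k) ≠ 0)
    (μ : Fin 4 → Fin 4 → k) (hμdiag : ∀ i, μ i i = 1)
    (hμ : ∀ i j, μ i j * μ j i = 1)
    (a11 a22 a33 a44 a12 a13 a14 a23 a24 a34 : k)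
    (ha11 : a11 ≠ 0) (X Y Z : k)
    (hX : X ^ 2 = a12 ^ 2 - μ 0 1 * a11 * a22)
    (hY : Y ^ 2 = a13 ^ 2 - μ 0 2 * a11 * a33)
    (hZ : Z ^ 2 = a14 ^ 2 - μ 0 3 * a11 * a44)
    (hD25 : (μ 1 0 * (a12 + X) * (a13 - Y) + μ 1 2 * μ 2 0 * (a13 + Y) * (a12 - X) - 2 * a23 * a11) = 0) (hD26 : (μ 1 0 * (a12 + X) * (a14 - Z) + μ 1 3 * μ 3 0 * (a14 + Z) * (a12 - X) - 2 * a24 * a11) = 0) (hD27 : (μ 2 0 * (a13 + Y) * (a14 - Z) + μ 2 3 * μ 3 0 * (a14 + Z) * (a13 - Y) - 2 * a34 * a11) = 0) :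
    (a11 • (z k μ 0 * z k μ 0) + a22 • (z k μ 1 * z k μ 1) +
      a33 • (z k μ 2 * z k μ 2) + a44 • (z k μ 3 * z k μ 3) +
      (2 * a12) • (z k μ 0 * z k μ 1) + (2 * a13) • (z k μ 0 * z k μ 2) +
      (2 * a14) • (z k μ 0 * z k μ 3) + (2 * a23) • (z k μ 1 * z k μ 2) +
      (2 * a24) • (z k μ 1 * z k μ 3) + (2 * a34) • (z k μ 2 * z k μ 3)) =
      a11⁻¹ • ((a11 • z k μ 0 + (μ 1 0 * (a12 + X)) • z k μ 1 +
          (μ 2 0 * (a13 + Y)) • z k μ 2 + (μ 3 0 * (a14 + Z)) • z k μ 3) *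
        (a11 • z k μ 0 + (a12 - X) • z k μ 1 + (a13 - Y) • z k μ 2 +
          (a14 - Z) • z k μ 3)) := by
  simp only [mul_add, add_mul, smul_mul_assoc, mul_smul_comm, smul_smul,
    zswap k μ 0 1, zswap k μ 0 2, zswap k μ 0 3, zswap k μ 1 2, zswap k μ 1 3, zswap k μ 2 3]
  match_scalars
  all_goals field_simp
  · linear_combination μ 1 0 * hX - a11 * a22 * hμ 1 0
  · linear_combination μ 2 0 * hY - a11 * a33 * hμ 2 0
  · linear_combination μ 3 0 * hZ - a11 * a44 * hμ 3 0
  · linear_combination (-(a12 + X)) * hμ 1 0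
  · linear_combination (-(a13 + Y)) * hμ 2 0
  · linear_combination (-(a14 + Z)) * hμ 3 0
  · linear_combination -hD25
  · linear_combination -hD26
  · linear_combination -hD27
end
end
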